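/- arXiv:1711.11436 — 12 statements merged into one kernel-verified Lean document; each statement's English description precedes it below -/
import Mathlib

section
/- Let n ≥ 1, let q, d : Fin n → ℝ be rows of a transition matrix, and let α > 0. Let S ⊆ Fin n and set Q = ∑_{j ∈ S} q j and D = ∑_{j ∈ S} d j. Assume conditions (C1) and (C2) hold for S at level α. Then (Q·(e^α − 1) + 1)/(D·(e^α − 1) + 1) is the greatest value (attained maximum) of the ratio (∑ j, q j · x j)/(∑ j, d j · x j) over all vectors x : Fin n → ℝ that are feasible for α. -/
lemma aux_sum_pos (n : ℕ) (d x : Fin n → ℝ) (hd0 : ∀ j, 0 ≤ d j)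
    (hd1 : ∑ j, d j = 1) (hx : ∀ j, 0 < x j) : 0 < ∑ j, d j * x j := by
  obtain ⟨j, hj⟩ : ∃ j, 0 < d j := by
    by_contra h
    push_neg at h
    have : ∑ j, d j = 0 := Finset.sum_eq_zero (fun j _ => le_antisymm (h j) (hd0 j))
    rw [this] at hd1; norm_num at hd1
  exact Finset.sum_pos' (fun i _ => mul_nonneg (hd0 i) (hx i).le)
    ⟨j, Finset.mem_univ j, mul_pos hj (hx j)⟩

/-- Under conditions (C1) and (C2) for a subset `S` at level `α`,
the value `(Q·(e^α − 1) + 1)/(D·(e^α − 1) + 1)` is the attained maximum of the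
linear-fractional objective over all feasible vectors. -/
theorem stmt_0 (n : ℕ) (hn : 1 ≤ n) (q d : Fin n → ℝ)
    (hq0 : ∀ j, 0 ≤ q j) (hq1 : ∑ j, q j = 1)
    (hd0 : ∀ j, 0 ≤ d j) (hd1 : ∑ j, d j = 1)
    (α : ℝ) (hα : 0 < α) (S : Finset (Fin n))
    (Q D : ℝ) (hQ : Q = ∑ j ∈ S, q j) (hD : D = ∑ j ∈ S, d j)
    (hC1 : ∀ j ∈ S, q j * (D * (Real.exp α - 1) + 1) > d j * (Q * (Real.exp α - 1) + 1))
    (hC2 : ∀ k, k ∉ S → q k * (D * (Real.exp α - 1) + 1) ≤ d k * (Q * (Real.exp α - 1) + 1)) :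
    IsGreatest
      {r : ℝ | ∃ x : Fin n → ℝ,
        (∀ j, 0 < x j ∧ x j < 1) ∧
        (∀ j k, x j ≤ Real.exp α * x k) ∧
        r = (∑ j, q j * x j) / (∑ j, d j * x j)}
      ((Q * (Real.exp α - 1) + 1) / (D * (Real.exp α - 1) + 1)) := by
  set E := Real.exp α - 1 with hEdef
  have hexp1 : 1 < Real.exp α := by
    calc (1:ℝ) = Real.exp 0 := (Real.exp_zero).symm
    _ < Real.exp α := Real.exp_lt_exp.mpr hα
  have hexppos : 0 < Real.exp α := Real.exp_pos α
  have hE : 0 < E := by simp [hEdef]; linarith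
  have hQ0 : 0 ≤ Q := hQ ▸ Finset.sum_nonneg (fun j _ => hq0 j)
  have hD0 : 0 ≤ D := hD ▸ Finset.sum_nonneg (fun j _ => hd0 j)
  have hβ : 0 < Q * E + 1 := by nlinarith
  have hδ : 0 < D * E + 1 := by nlinarith
  -- complement sums
  have hQc : ∑ j ∈ Sᶜ, q j = 1 - Q := by
    have := Finset.sum_add_sum_compl S q
    rw [hq1] at this; rw [hQ]; linarith
  have hDc : ∑ j ∈ Sᶜ, d j = 1 - D := by
    have := Finset.sum_add_sum_compl S d
    rw [hd1] at this; rw [hD]; linarith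
  constructor
  · -- membership
    set y : Fin n → ℝ := fun j => if j ∈ S then 1/2 else Real.exp (-α) / 2 with hy
    have hypos : ∀ j, 0 < y j := by
      intro j; simp only [hy]; split_ifs
      · norm_num
      · positivity
    have hyub : ∀ j, y j ≤ 1/2 := by
      intro j; simp only [hy]; split_ifs
      · exact le_rfl
      · have : Real.exp (-α) ≤ 1 := by
          rw [Real.exp_le_one_iff]; linarith
        linarith
    have hylb : ∀ j, Real.exp (-α) / 2 ≤ y j := by
      intro j; simp only [hy]; split_ifs
      · have : Real.exp (-α) ≤ 1 := by rw [Real.exp_le_one_iff]; linarith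
        linarith
      · exact le_rfl
    refine ⟨y, fun j => ⟨hypos j, ?_⟩, fun j k => ?_, ?_⟩
    · have := hyub j; linarith
    · calc y j ≤ 1/2 := hyub j
        _ = Real.exp α * (Real.exp (-α) / 2) := by
            rw [Real.exp_neg]; field_simp
        _ ≤ Real.exp α * y k := by
            have := hylb k
            nlinarith [hylb k]
    · have hqs : ∑ j, q j * y j = Q * (1/2) + (1 - Q) * (Real.exp (-α)/2) := by
        rw [← Finset.sum_add_sum_compl S (fun j => q j * y j)]
        have h1 : ∑ j ∈ S, q j * y j = Q * (1/2) := by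
          rw [hQ, Finset.sum_mul]
          exact Finset.sum_congr rfl (fun j hj => by simp [hy, hj])
        have h2 : ∑ j ∈ Sᶜ, q j * y j = (1 - Q) * (Real.exp (-α)/2) := by
          rw [← hQc, Finset.sum_mul]
          refine Finset.sum_congr rfl (fun j hj => ?_)
          have : j ∉ S := Finset.mem_compl.mp hj
          simp [hy, this]
        rw [h1, h2]
      have hds : ∑ j, d j * y j = D * (1/2) + (1 - D) * (Real.exp (-α)/2) := by
        rw [← Finset.sum_add_sum_compl S (fun j => d j * y j)]
        have h1 : ∑ j ∈ S, d j * y j = D * (1/2) := by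
          rw [hD, Finset.sum_mul]
          exact Finset.sum_congr rfl (fun j hj => by simp [hy, hj])
        have h2 : ∑ j ∈ Sᶜ, d j * y j = (1 - D) * (Real.exp (-α)/2) := by
          rw [← hDc, Finset.sum_mul]
          refine Finset.sum_congr rfl (fun j hj => ?_)
          have : j ∉ S := Finset.mem_compl.mp hj
          simp [hy, this]
        rw [h1, h2]
      have hdpos : 0 < ∑ j, d j * y j :=
        aux_sum_pos n d y hd0 hd1 hypos
      rw [hqs, hds]
      rw [div_eq_div_iff hδ.ne' (by rw [hds] at hdpos; exact hdpos.ne')]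
      have hen : Real.exp (-α) = (Real.exp α)⁻¹ := Real.exp_neg α
      rw [hen, hEdef]
      field_simp
      ring
  · -- upper bound
    rintro r ⟨x, hx01, hxfeas, rfl⟩
    have hxpos : ∀ j, 0 < x j := fun j => (hx01 j).1
    have hdpos : 0 < ∑ j, d j * x j := aux_sum_pos n d x hd0 hd1 hxpos
    rw [div_le_div_iff₀ hdpos hδ]
    -- min element
    obtain ⟨k0, _, hk0⟩ := Finset.exists_min_image Finset.univ x
      (Finset.univ_nonempty_iff.mpr (Fin.pos_iff_nonempty.mp hn))
    set m := x k0 with hm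
    have hmpos : 0 < m := hxpos k0
    set a : Fin n → ℝ := fun j => q j * (D * E + 1) - d j * (Q * E + 1) with ha
    have key : ∑ j, a j * x j ≤ 0 := by
      have hS : ∑ j ∈ S, a j * x j ≤ Real.exp α * m * (Q - D) := by
        have hSsum : ∑ j ∈ S, a j = Q - D := by
          simp only [ha, Finset.sum_sub_distrib, ← Finset.sum_mul, ← hQ, ← hD]
          ring
        calc ∑ j ∈ S, a j * x j ≤ ∑ j ∈ S, a j * (Real.exp α * m) := by
              refine Finset.sum_le_sum (fun j hj => ?_)
              have haj : 0 < a j := by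
                have := hC1 j hj; simp only [ha]; linarith
              exact mul_le_mul_of_nonneg_left (hxfeas j k0) haj.le
          _ = Real.exp α * m * (Q - D) := by
              rw [← Finset.sum_mul, hSsum]; ring
      have hSc : ∑ j ∈ Sᶜ, a j * x j ≤ m * ((D - Q) * Real.exp α) := by
        have hScsum : ∑ j ∈ Sᶜ, a j = (D - Q) * Real.exp α := by
          simp only [ha, Finset.sum_sub_distrib, ← Finset.sum_mul, hQc, hDc, hEdef]
          ring
        calc ∑ j ∈ Sᶜ, a j * x j ≤ ∑ j ∈ Sᶜ, a j * m := by
              refine Finset.sum_le_sum (fun j hj => ?_)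
              have hjn : j ∉ S := Finset.mem_compl.mp hj
              have haj : a j ≤ 0 := by
                have := hC2 j hjn; simp only [ha]; linarith
              exact mul_le_mul_of_nonpos_left (hk0 j (Finset.mem_univ j)) haj
          _ = m * ((D - Q) * Real.exp α) := by
              rw [← Finset.sum_mul, hScsum]; ring
      have := Finset.sum_add_sum_compl S (fun j => a j * x j)
      nlinarith [hS, hSc]
    have expand : ∑ j, a j * x j
        = (∑ j, q j * x j) * (D * E + 1) - (∑ j, d j * x j) * (Q * E + 1) := by
      simp only [ha, sub_mul, Finset.sum_sub_distrib, Finset.sum_mul]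
      congr 1
      · exact Finset.sum_congr rfl (fun j _ => by ring)
      · exact Finset.sum_congr rfl (fun j _ => by ring)
    linarith [expand ▸ key]
end

section
/- Let n ≥ 1, let q, d : Fin n → ℝ be rows of a transition matrix, and let α > 0. Let S ⊆ Fin n with sums Q = ∑_{j ∈ S} q j and D = ∑_{j ∈ S} d j, and assume conditions (C1) and (C2) hold for S at level α. Then for every j ∈ S one has q j > d j. -/
/-- Under conditions (C1) and (C2) for a subset `S` at level `α`,
every index `j ∈ S` satisfies `q j > d j`. -/
theorem stmt_1 (n : ℕ) (hn : 1 ≤ n) (q d : Fin n → ℝ)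
    (hq0 : ∀ j, 0 ≤ q j) (hq1 : ∑ j, q j = 1)
    (hd0 : ∀ j, 0 ≤ d j) (hd1 : ∑ j, d j = 1)
    (α : ℝ) (hα : 0 < α) (S : Finset (Fin n))
    (Q D : ℝ) (hQ : Q = ∑ j ∈ S, q j) (hD : D = ∑ j ∈ S, d j)
    (hC1 : ∀ j ∈ S, q j * (D * (Real.exp α - 1) + 1) > d j * (Q * (Real.exp α - 1) + 1))
    (hC2 : ∀ k, k ∉ S → q k * (D * (Real.exp α - 1) + 1) ≤ d k * (Q * (Real.exp α - 1) + 1)) :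
    ∀ j ∈ S, q j > d j := by
  intro j hj
  have hE : 0 < Real.exp α - 1 := by
    have : (1:ℝ) < Real.exp α := by
      have := Real.exp_lt_exp.2 hα
      simpa [Real.exp_zero] using this
    linarith
  have hD0 : 0 ≤ D := hD ▸ Finset.sum_nonneg (fun i _ => hd0 i)
  have hQD : Q * (D * (Real.exp α - 1) + 1) > D * (Q * (Real.exp α - 1) + 1) := by
    calc D * (Q * (Real.exp α - 1) + 1) = ∑ i ∈ S, d i * (Q * (Real.exp α - 1) + 1) := by
          rw [hD, Finset.sum_mul]
      _ < ∑ i ∈ S, q i * (D * (Real.exp α - 1) + 1) :=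
          Finset.sum_lt_sum_of_nonempty ⟨j, hj⟩ (fun i hi => hC1 i hi)
      _ = Q * (D * (Real.exp α - 1) + 1) := by rw [hQ, Finset.sum_mul]
  have hQgtD : Q > D := by nlinarith
  have h1 := hC1 j hj
  have hdj := hd0 j
  have hDE1 : 0 < D * (Real.exp α - 1) + 1 := by nlinarith
  nlinarith [mul_nonneg (mul_nonneg hdj hE.le) (sub_nonneg.2 hQgtD.le)]
end

section
/- Let n ≥ 1, let q, d : Fin n → ℝ be rows of a transition matrix, and let α > 0. Suppose there exists an index i with q i = 1 and d i = 0. Then α is the greatest value (attained maximum) of log((∑ j, q j · x j)/(∑ j, d j · x j)) over all vectors x : Fin n → ℝ that are feasible for α; i.e., the privacy loss function is the identity, L(α) = α. -/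
/-- If there is an index `i` with `q i = 1` and `d i = 0`, then the maximum of the
log ratio over all feasible vectors is `α`: the privacy loss function is the identity. -/
theorem stmt_4 (n : ℕ) (hn : 1 ≤ n) (q d : Fin n → ℝ)
    (hq0 : ∀ j, 0 ≤ q j) (hq1 : ∑ j, q j = 1)
    (hd0 : ∀ j, 0 ≤ d j) (hd1 : ∑ j, d j = 1)
    (hex : ∃ i, q i = 1 ∧ d i = 0)
    (α : ℝ) (hα : 0 < α) :
    IsGreatest
      {r : ℝ | ∃ x : Fin n → ℝ,
        (∀ j, 0 < x j ∧ x j < 1) ∧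
        (∀ j k, x j ≤ Real.exp α * x k) ∧
        r = Real.log ((∑ j, q j * x j) / (∑ j, d j * x j))}
      α := by
  obtain ⟨i, hqi, hdi⟩ := hex
  have hea : (1:ℝ) ≤ Real.exp α := by
    rw [← Real.exp_zero]; exact Real.exp_le_exp.mpr hα.le
  have hqz : ∀ j, j ≠ i → q j = 0 := by
    intro j hj
    have hsum : ∑ k ∈ Finset.univ.erase i, q k = 0 := by
      have h := Finset.add_sum_erase Finset.univ q (Finset.mem_univ i)
      rw [hq1, hqi] at h
      linarith
    exact (Finset.sum_eq_zero_iff_of_nonneg (fun k _ => hq0 k)).mp hsum j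
      (Finset.mem_erase.mpr ⟨hj, Finset.mem_univ j⟩)
  have hqx : ∀ x : Fin n → ℝ, ∑ j, q j * x j = x i := by
    intro x
    rw [Finset.sum_eq_single i]
    · rw [hqi, one_mul]
    · intro b _ hb; rw [hqz b hb, zero_mul]
    · intro h; exact absurd (Finset.mem_univ i) h
  constructor
  · -- membership
    set c : ℝ := Real.exp (-α) / 2 with hc
    have hc0 : 0 < c := by positivity
    have hec : Real.exp α * c = 1/2 := by
      rw [hc, ← mul_div_assoc, ← Real.exp_add]
      simp
    have hc1 : c < 1 := by
      have : c ≤ Real.exp α * c := le_mul_of_one_le_left hc0.le hea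
      rw [hec] at this; linarith
    refine ⟨fun j => if j = i then Real.exp α * c else c, ?_, ?_, ?_⟩
    · intro j
      by_cases h : j = i
      · simp only [h, if_pos rfl, hec]; norm_num
      · simp only [if_neg h]; exact ⟨hc0, hc1⟩
    · intro j k
      beta_reduce
      by_cases hj : j = i <;> by_cases hk : k = i
      · rw [if_pos hj, if_pos hk]; nlinarith [Real.exp_pos α]
      · rw [if_pos hj, if_neg hk]
      · rw [if_neg hj, if_pos hk]; nlinarith [Real.exp_pos α]
      · rw [if_neg hj, if_neg hk]; exact le_mul_of_one_le_left hc0.le hea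
    · rw [hqx]
      have hdx : ∑ j, d j * (if j = i then Real.exp α * c else c) = c := by
        have : ∀ j ∈ Finset.univ, d j * (if j = i then Real.exp α * c else c) = d j * c := by
          intro j _
          by_cases h : j = i
          · simp [h, hdi]
          · simp [h]
        rw [Finset.sum_congr rfl this, ← Finset.sum_mul, hd1, one_mul]
      rw [hdx, if_pos rfl, mul_div_assoc, div_self hc0.ne', mul_one, Real.log_exp]
  · -- upper bound
    rintro r ⟨x, hx, hfeas, rfl⟩
    have hS : 0 < ∑ j, d j * x j := by
      obtain ⟨j0, hj0⟩ : ∃ j0, 0 < d j0 := by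
        by_contra h
        push_neg at h
        have : ∑ j, d j = 0 := Finset.sum_eq_zero (fun j _ => le_antisymm (h j) (hd0 j))
        rw [hd1] at this; norm_num at this
      have h1 : d j0 * x j0 ≤ ∑ j, d j * x j :=
        Finset.single_le_sum (fun j _ => mul_nonneg (hd0 j) (hx j).1.le) (Finset.mem_univ j0)
      nlinarith [(hx j0).1]
    rw [hqx]
    have hle : x i ≤ Real.exp α * ∑ j, d j * x j := by
      calc x i = ∑ j, d j * x i := by rw [← Finset.sum_mul, hd1, one_mul]
        _ ≤ ∑ j, d j * (Real.exp α * x j) :=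
          Finset.sum_le_sum (fun j _ => mul_le_mul_of_nonneg_left (hfeas i j) (hd0 j))
        _ = Real.exp α * ∑ j, d j * x j := by
          rw [Finset.mul_sum]; exact Finset.sum_congr rfl (fun j _ => by ring)
    have hpos : 0 < x i / ∑ j, d j * x j := div_pos (hx i).1 hS
    rw [Real.log_le_iff_le_exp hpos]
    rw [div_le_iff₀ hS]
    exact hle
end

section
/- Let n ≥ 1 and let q, d : Fin n → ℝ be rows of a transition matrix with q j ≠ d j for every j. Assume the indices are ordered so that the ratios q j / d j are strictly decreasing, expressed by cross-multiplication: q j · d j' > q j' · d j whenever j < j'. Let k be such that q j > d j exactly for the first k indices (i.e., for j < k in 0-based indexing) and q j ≤ d j for the remaining indices. Let α > 0. If S ⊆ Fin n is a subset whose sums Q = ∑_{j ∈ S} q j and D = ∑_{j ∈ S} d j satisfy conditions (C1) and (C2) at level α, then S is an initial segment: there exists m with 1 ≤ m ≤ k such that S = { j : Fin n | (j : ℕ) < m }. -/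
/-- With strictly decreasing ratios `q j / d j` and `q j > d j` exactly on the
first `k` indices, any subset `S` satisfying (C1) and (C2) at level `α > 0` is an initial
segment `{ j | (j : ℕ) < m }` for some `1 ≤ m ≤ k`. -/
theorem stmt_5 (n : ℕ) (hn : 1 ≤ n) (q d : Fin n → ℝ)
    (hq0 : ∀ j, 0 ≤ q j) (hq1 : ∑ j, q j = 1)
    (hd0 : ∀ j, 0 ≤ d j) (hd1 : ∑ j, d j = 1)
    (hne : ∀ j, q j ≠ d j)
    (hord : ∀ j j' : Fin n, j < j' → q j * d j' > q j' * d j)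
    (k : ℕ) (hk : ∀ j : Fin n, ((j : ℕ) < k ↔ d j < q j))
    (α : ℝ) (hα : 0 < α) (S : Finset (Fin n))
    (Q D : ℝ) (hQ : Q = ∑ j ∈ S, q j) (hD : D = ∑ j ∈ S, d j)
    (hC1 : ∀ j ∈ S, q j * (D * (Real.exp α - 1) + 1) > d j * (Q * (Real.exp α - 1) + 1))
    (hC2 : ∀ j, j ∉ S → q j * (D * (Real.exp α - 1) + 1) ≤ d j * (Q * (Real.exp α - 1) + 1)) :
    ∃ m : ℕ, 1 ≤ m ∧ m ≤ k ∧ ∀ j : Fin n, (j ∈ S ↔ (j : ℕ) < m) := by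
  have hninst : Nonempty (Fin n) := ⟨⟨0, hn⟩⟩
  have hE : 0 < Real.exp α - 1 := by
    have := Real.add_one_lt_exp hα.ne'
    linarith
  set E : ℝ := Real.exp α - 1 with hEdef
  have hD0 : 0 ≤ D := by
    rw [hD]; exact Finset.sum_nonneg fun j _ => hd0 j
  have hQ0 : 0 ≤ Q := by
    rw [hQ]; exact Finset.sum_nonneg fun j _ => hq0 j
  have hA : 0 < D * E + 1 := by nlinarith
  have hB : 0 < Q * E + 1 := by nlinarith
  -- S is nonempty
  have hSne : S.Nonempty := by
    rcases Finset.eq_empty_or_nonempty S with h | h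
    · exfalso
      have hQ' : Q = 0 := by rw [hQ, h, Finset.sum_empty]
      have hD' : D = 0 := by rw [hD, h, Finset.sum_empty]
      have hlt : ∀ j : Fin n, q j < d j := by
        intro j
        have := hC2 j (by simp [h])
        rw [hQ', hD'] at this
        have hle : q j ≤ d j := by nlinarith
        exact lt_of_le_of_ne hle (hne j)
      have : ∑ j, q j < ∑ j, d j :=
        Finset.sum_lt_sum_of_nonempty Finset.univ_nonempty fun j _ => hlt j
      rw [hq1, hd1] at this
      exact lt_irrefl 1 this
    · exact h
  -- D < Q
  have hDQ : D < Q := by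
    have hsum : ∑ j ∈ S, d j * (Q * E + 1) < ∑ j ∈ S, q j * (D * E + 1) :=
      Finset.sum_lt_sum_of_nonempty hSne fun j hj => hC1 j hj
    rw [← Finset.sum_mul, ← Finset.sum_mul, ← hQ, ← hD] at hsum
    nlinarith
  have hAB : D * E + 1 < Q * E + 1 := by nlinarith
  -- every element of S satisfies d j < q j
  have hqd : ∀ j ∈ S, d j < q j := by
    intro j hj
    have h1 := hC1 j hj
    nlinarith [hd0 j]
  -- S is downward closed
  have hdc : ∀ j j' : Fin n, j < j' → j' ∈ S → j ∈ S := by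
    intro j j' hlt hj'
    by_contra hj
    have h1 := hC1 j' hj'
    have h2 := hC2 j hj
    have ho := hord j j' hlt
    nlinarith [mul_le_mul_of_nonneg_left h1.le (hd0 j),
      mul_le_mul_of_nonneg_left h2 (hd0 j'), hd0 j, hd0 j']
  -- S is not univ, so complement is nonempty
  have hne_univ : S ≠ Finset.univ := by
    intro h
    have : ∑ j, d j < ∑ j, q j :=
      Finset.sum_lt_sum_of_nonempty Finset.univ_nonempty
        fun j _ => hqd j (h ▸ Finset.mem_univ j)
    rw [hq1, hd1] at this
    exact lt_irrefl 1 this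
  have hcomp : Sᶜ.Nonempty := by
    obtain ⟨j, hj⟩ : ∃ j, j ∉ S := by
      by_contra h
      push_neg at h
      exact hne_univ (Finset.eq_univ_iff_forall.mpr h)
    exact ⟨j, by simpa using hj⟩
  set j₀ : Fin n := Sᶜ.min' hcomp with hj₀def
  have hj₀ : j₀ ∉ S := by
    have := Finset.min'_mem Sᶜ hcomp
    simpa using this
  have hmem : ∀ j : Fin n, j ∈ S ↔ (j : ℕ) < (j₀ : ℕ) := by
    intro j
    constructor
    · intro hj
      by_contra h
      push_neg at h
      have : j₀ < j ∨ j₀ = j := by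
        rcases lt_or_eq_of_le (show j₀ ≤ j from h) with h' | h'
        · exact Or.inl h'
        · exact Or.inr h'
      rcases this with h' | h'
      · exact hj₀ (hdc j₀ j h' hj)
      · exact hj₀ (h' ▸ hj)
    · intro hj
      by_contra h
      have : j₀ ≤ j := Finset.min'_le Sᶜ j (by simpa using h)
      exact absurd hj (not_lt.mpr this)
  -- m := j₀.val
  refine ⟨(j₀ : ℕ), ?_, ?_, hmem⟩
  · obtain ⟨i, hi⟩ := hSne
    have := (hmem i).mp hi
    omega
  · have hm1 : 1 ≤ (j₀ : ℕ) := by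
      obtain ⟨i, hi⟩ := hSne
      have := (hmem i).mp hi
      omega
    have hlt : (j₀ : ℕ) - 1 < n := by omega
    set i : Fin n := ⟨(j₀ : ℕ) - 1, hlt⟩ with hidef
    have hiS : i ∈ S := (hmem i).mpr (by simp [hidef]; omega)
    have := (hk i).mpr (hqd i hiS)
    simp [hidef] at this
    omega
end

section
/- Let n ≥ 1 and let q, d : Fin n → ℝ be rows of a transition matrix with q j ≠ d j for every j, with the indices ordered so that q j · d j' > q j' · d j whenever j < j', and with q j > d j exactly for the first k indices. For 1 ≤ m ≤ k let Q_m = ∑_{j < m} q j and D_m = ∑_{j < m} d j be the prefix sums. Then for every α > 0, the supremum of (∑ j, q j · x j)/(∑ j, d j · x j) over all vectors x : Fin n → ℝ feasible for α is attained and equals max over m ∈ {1, …, k} of (Q_m·(e^α − 1) + 1)/(D_m·(e^α − 1) + 1). -/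
set_option maxHeartbeats 1000000


/-- With strictly decreasing ratios and `q j > d j` exactly on the first `k`
indices, for every `α > 0` the supremum of the linear-fractional objective over feasible
vectors is attained and equals the maximum over `m ∈ {1, …, k}` of the prefix-sum formula
`(Q_m·(e^α − 1) + 1)/(D_m·(e^α − 1) + 1)`. -/
theorem stmt_6 (n : ℕ) (hn : 1 ≤ n) (q d : Fin n → ℝ)
    (hq0 : ∀ j, 0 ≤ q j) (hq1 : ∑ j, q j = 1)
    (hd0 : ∀ j, 0 ≤ d j) (hd1 : ∑ j, d j = 1)
    (hne : ∀ j, q j ≠ d j)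
    (hord : ∀ j j' : Fin n, j < j' → q j * d j' > q j' * d j)
    (k : ℕ) (hk : ∀ j : Fin n, ((j : ℕ) < k ↔ d j < q j))
    (α : ℝ) (hα : 0 < α) :
    ∃ V : ℝ,
      IsGreatest
        {r : ℝ | ∃ x : Fin n → ℝ,
          (∀ j, 0 < x j ∧ x j < 1) ∧
          (∀ j j', x j ≤ Real.exp α * x j') ∧
          r = (∑ j, q j * x j) / (∑ j, d j * x j)} V ∧
      IsGreatest
        {v : ℝ | ∃ m : ℕ, 1 ≤ m ∧ m ≤ k ∧
          v = ((∑ j ∈ Finset.univ.filter (fun j : Fin n => (j : ℕ) < m), q j) * (Real.exp α - 1) + 1) /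
              ((∑ j ∈ Finset.univ.filter (fun j : Fin n => (j : ℕ) < m), d j) * (Real.exp α - 1) + 1)} V := by
  have hinst : Nonempty (Fin n) := ⟨⟨0, hn⟩⟩
  have hE1 : 1 < Real.exp α := by
    calc (1:ℝ) = Real.exp 0 := Real.exp_zero.symm
    _ < Real.exp α := Real.exp_lt_exp.mpr hα
  set E := Real.exp α with hEdef
  have hEpos : 0 < E := lt_trans one_pos hE1
  set Q : ℕ → ℝ := fun m => ∑ j ∈ Finset.univ.filter (fun j : Fin n => (j : ℕ) < m), q j with hQ
  set D : ℕ → ℝ := fun m => ∑ j ∈ Finset.univ.filter (fun j : Fin n => (j : ℕ) < m), d j with hD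
  have hDnn : ∀ m, 0 ≤ D m := fun m => Finset.sum_nonneg fun j _ => hd0 j
  have hQnn : ∀ m, 0 ≤ Q m := fun m => Finset.sum_nonneg fun j _ => hq0 j
  have hden : ∀ m, 0 < D m * (E - 1) + 1 := by
    intro m; nlinarith [hDnn m]
  set f : ℕ → ℝ := fun m => (Q m * (E - 1) + 1) / (D m * (E - 1) + 1) with hf
  -- k ≥ 1
  have hk1 : 1 ≤ k := by
    by_contra h
    push_neg at h
    have hk0 : k = 0 := by omega
    have hlt : ∀ j ∈ Finset.univ, q j < d j := by
      intro j _
      rcases lt_or_gt_of_ne (hne j) with h1 | h1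
      · exact h1
      · exact absurd ((hk j).mpr h1) (by omega)
    have hsum : ∑ j, q j < ∑ j, d j :=
      Finset.sum_lt_sum_of_nonempty Finset.univ_nonempty hlt
    rw [hq1, hd1] at hsum
    exact lt_irrefl _ hsum
  have hfge1 : ∀ m, 1 ≤ m → m ≤ k → 1 ≤ f m := by
    intro m _ hmk
    have hle : D m ≤ Q m := by
      apply Finset.sum_le_sum
      intro j hj
      exact le_of_lt ((hk j).mp (lt_of_lt_of_le (Finset.mem_filter.mp hj).2 hmk))
    show (1 : ℝ) ≤ (Q m * (E - 1) + 1) / (D m * (E - 1) + 1)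
    rw [le_div_iff₀ (hden m)]
    nlinarith
  obtain ⟨ms, hms, hmax⟩ := Finset.exists_max_image (Finset.Icc 1 k) f
    ⟨1, Finset.mem_Icc.mpr ⟨le_refl 1, hk1⟩⟩
  obtain ⟨hms1, hmsk⟩ := Finset.mem_Icc.mp hms
  have hV1 : 1 ≤ f ms := hfge1 ms hms1 hmsk
  refine ⟨f ms, ?_, ?_, ?_⟩
  · -- IsGreatest for the optimization set
    constructor
    · -- membership: construct an optimal feasible x
      set c : ℝ := 1 / (2 * E) with hc
      have hcpos : 0 < c := by
        rw [hc]; exact div_pos one_pos (by linarith)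
      have hc2 : 2 * E * c = 1 := by
        rw [hc]; field_simp
      have hEc : E * c = 1 / 2 := by nlinarith
      refine ⟨fun j => if (j : ℕ) < ms then E * c else c, ?_, ?_, ?_⟩
      · intro j
        dsimp only
        constructor
        · split_ifs
          · exact mul_pos hEpos hcpos
          · exact hcpos
        · split_ifs
          · rw [hEc]; norm_num
          · nlinarith
      · intro j j'
        dsimp only
        split_ifs with h1 h2 h2
        · nlinarith
        · nlinarith
        · nlinarith [mul_nonneg hcpos.le (sub_nonneg.mpr hE1.le),
            mul_nonneg (mul_nonneg hcpos.le (sub_nonneg.mpr hE1.le)) (sub_nonneg.mpr hE1.le)]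
        · nlinarith
      · have hsplit : ∀ g : Fin n → ℝ, (∑ j, g j) = 1 →
            (∑ j, g j * (if (j : ℕ) < ms then E * c else c)) =
            ((∑ j ∈ Finset.univ.filter (fun j : Fin n => (j : ℕ) < ms), g j) * (E * c)
              + (1 - ∑ j ∈ Finset.univ.filter (fun j : Fin n => (j : ℕ) < ms), g j) * c) := by
          intro g hg
          have hfadd := Finset.sum_filter_add_sum_filter_not Finset.univ
            (fun j : Fin n => (j : ℕ) < ms) (fun j => g j * (if (j : ℕ) < ms then E * c else c))
          have hfadd2 := Finset.sum_filter_add_sum_filter_not Finset.univ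
            (fun j : Fin n => (j : ℕ) < ms) g
          rw [hg] at hfadd2
          have h1 : (∑ j ∈ Finset.univ.filter (fun j : Fin n => (j : ℕ) < ms),
              g j * (if (j : ℕ) < ms then E * c else c)) =
              (∑ j ∈ Finset.univ.filter (fun j : Fin n => (j : ℕ) < ms), g j) * (E * c) := by
            rw [Finset.sum_mul]
            apply Finset.sum_congr rfl
            intro j hj
            rw [if_pos (Finset.mem_filter.mp hj).2]
          have h2 : (∑ j ∈ Finset.univ.filter (fun j : Fin n => ¬(j : ℕ) < ms),
              g j * (if (j : ℕ) < ms then E * c else c)) =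
              (∑ j ∈ Finset.univ.filter (fun j : Fin n => ¬(j : ℕ) < ms), g j) * c := by
            rw [Finset.sum_mul]
            apply Finset.sum_congr rfl
            intro j hj
            rw [if_neg (Finset.mem_filter.mp hj).2]
          have h3 : (∑ j ∈ Finset.univ.filter (fun j : Fin n => ¬(j : ℕ) < ms), g j)
              = 1 - (∑ j ∈ Finset.univ.filter (fun j : Fin n => (j : ℕ) < ms), g j) := by
            linarith
          rw [← hfadd, h1, h2, h3]
        dsimp only
        rw [hsplit q hq1, hsplit d hd1]
        show f ms = (Q ms * (E * c) + (1 - Q ms) * c) / (D ms * (E * c) + (1 - D ms) * c)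
        have hnum : Q ms * (E * c) + (1 - Q ms) * c = c * (Q ms * (E - 1) + 1) := by ring
        have hdenx : D ms * (E * c) + (1 - D ms) * c = c * (D ms * (E - 1) + 1) := by ring
        rw [hnum, hdenx, mul_div_mul_left _ _ (ne_of_gt hcpos)]
    · -- upper bound of the optimization set
      rintro r ⟨x, hx01, hxcon, rfl⟩
      have hdj : ∃ j : Fin n, 0 < d j := by
        by_contra h
        push_neg at h
        have hz : ∀ j : Fin n, d j = 0 := fun j => le_antisymm (h j) (hd0 j)
        have : ∑ j, d j = 0 := Finset.sum_eq_zero fun j _ => hz j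
        rw [hd1] at this; norm_num at this
      obtain ⟨j₁, hj₁⟩ := hdj
      have hdenpos : 0 < ∑ j, d j * x j := by
        apply Finset.sum_pos' (fun j _ => mul_nonneg (hd0 j) (hx01 j).1.le)
        exact ⟨j₁, Finset.mem_univ _, mul_pos hj₁ (hx01 j₁).1⟩
      rw [div_le_iff₀ hdenpos]
      -- minimal entry of x
      obtain ⟨j₀, _, hj₀min⟩ := Finset.exists_min_image Finset.univ x Finset.univ_nonempty
      set c := x j₀ with hc
      have hcpos : 0 < c := (hx01 j₀).1
      have hub : ∀ j, x j ≤ E * c := fun j => hxcon j j₀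
      have hlb : ∀ j, c ≤ x j := fun j => hj₀min j (Finset.mem_univ j)
      set V := f ms with hV
      set S := Finset.univ.filter (fun j : Fin n => V * d j < q j) with hS
      have hSdown : ∀ j j' : Fin n, j ≤ j' → j' ∈ S → j ∈ S := by
        intro j j' hle hj'
        rcases eq_or_lt_of_le hle with rfl | hlt
        · exact hj'
        have hmem : V * d j' < q j' := by
          have := hj'
          rw [hS, Finset.mem_filter] at this
          exact this.2
        have hdj' : 0 < d j' := by
          rcases eq_or_lt_of_le (hd0 j') with h | h
          · exfalso
            have h3 := hord j j' hlt
            rw [← h, mul_zero] at h3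
            exact absurd h3 (not_lt.mpr (mul_nonneg (hq0 j') (hd0 j)))
          · exact h
        have h2 : V * d j' * d j ≤ q j' * d j := mul_le_mul_of_nonneg_right hmem.le (hd0 j)
        have h3 : q j' * d j < q j * d j' := hord j j' hlt
        rw [hS, Finset.mem_filter]
        refine ⟨Finset.mem_univ _, ?_⟩
        have h4 : V * d j * d j' < q j * d j' := by nlinarith
        exact lt_of_mul_lt_mul_right h4 (hd0 j')
      have hScard : ∀ j : Fin n, j ∈ S ↔ (j : ℕ) < S.card := by
        intro j
        constructor
        · intro hj
          have hsub : Finset.Iic j ⊆ S := fun j'' hj'' =>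
            hSdown j'' j (Finset.mem_Iic.mp hj'') hj
          have := Finset.card_le_card hsub
          rw [Fin.card_Iic] at this
          omega
        · intro hj
          by_contra hjS
          have hsub : S ⊆ Finset.Iio j := by
            intro j'' hj''
            rw [Finset.mem_Iio]
            by_contra hge
            push_neg at hge
            exact hjS (hSdown j j'' hge hj'')
          have := Finset.card_le_card hsub
          rw [Fin.card_Iio] at this
          omega
      have hm0k : S.card ≤ k := by
        by_contra h
        push_neg at h
        have hcn : S.card ≤ n := le_trans (Finset.card_le_univ S) (by simp)
        have hkn : k < n := lt_of_lt_of_le h hcn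
        have hjS : (⟨k, hkn⟩ : Fin n) ∈ S := (hScard ⟨k, hkn⟩).mpr (by simpa using h)
        have hmem : V * d ⟨k, hkn⟩ < q ⟨k, hkn⟩ := by
          rw [hS, Finset.mem_filter] at hjS
          exact hjS.2
        have hnlt : ¬ d (⟨k, hkn⟩ : Fin n) < q ⟨k, hkn⟩ := by
          rw [← hk ⟨k, hkn⟩]; simp
        push_neg at hnlt
        nlinarith [hd0 (⟨k, hkn⟩ : Fin n)]
      -- identify prefix sums
      have hSeq : S = Finset.univ.filter (fun j : Fin n => (j : ℕ) < S.card) := by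
        ext j
        simp only [Finset.mem_filter, Finset.mem_univ, true_and]
        rw [show (j ∈ S ↔ V * d j < q j) from by rw [hS, Finset.mem_filter]; simp] at *
        rw [← hScard j, hS, Finset.mem_filter]
        simp
      have hq' : ∑ j ∈ S, q j = Q S.card := by
        conv_lhs => rw [hSeq]
      have hd' : ∑ j ∈ S, d j = D S.card := by
        conv_lhs => rw [hSeq]
      have hP : ∑ j ∈ S, (q j - V * d j) = Q S.card - V * D S.card := by
        rw [Finset.sum_sub_distrib, ← Finset.mul_sum, hq', hd']
      have hNsum : (∑ j ∈ S, (q j - V * d j))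
          + (∑ j ∈ Finset.univ.filter (fun j : Fin n => ¬ V * d j < q j), (q j - V * d j))
          = 1 - V := by
        rw [hS]
        rw [Finset.sum_filter_add_sum_filter_not Finset.univ (fun j : Fin n => V * d j < q j)]
        rw [Finset.sum_sub_distrib, ← Finset.mul_sum, hq1, hd1]
        ring
      have hf0 : Q S.card * (E - 1) + 1 ≤ V * (D S.card * (E - 1) + 1) := by
        rcases Nat.eq_zero_or_pos S.card with h0 | h0
        · rw [h0]
          have hQ0 : Q 0 = 0 := by
            show ∑ j ∈ Finset.univ.filter (fun j : Fin n => (j : ℕ) < 0), q j = 0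
            simp
          have hD0 : D 0 = 0 := by
            show ∑ j ∈ Finset.univ.filter (fun j : Fin n => (j : ℕ) < 0), d j = 0
            simp
          rw [hQ0, hD0]
          nlinarith
        · have hle : (Q S.card * (E - 1) + 1) / (D S.card * (E - 1) + 1) ≤ V :=
            hmax S.card (Finset.mem_Icc.mpr ⟨h0, hm0k⟩)
          rw [div_le_iff₀ (hden S.card)] at hle
          exact hle
      -- main estimate
      have hbound : ∑ j, (q j - V * d j) * x j
          ≤ c * ((Q S.card - V * D S.card) * (E - 1) + 1 - V) := by
        have hsplit := Finset.sum_filter_add_sum_filter_not Finset.univ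
          (fun j : Fin n => V * d j < q j) (fun j => (q j - V * d j) * x j)
        rw [← hsplit]
        have h1 : (∑ j ∈ S, (q j - V * d j) * x j) ≤ (∑ j ∈ S, (q j - V * d j)) * (E * c) := by
          rw [Finset.sum_mul]
          apply Finset.sum_le_sum
          intro j hj
          have hmem : V * d j < q j := by
            rw [hS, Finset.mem_filter] at hj; exact hj.2
          exact mul_le_mul_of_nonneg_left (hub j) (by linarith)
        have h2 : (∑ j ∈ Finset.univ.filter (fun j : Fin n => ¬ V * d j < q j),
              (q j - V * d j) * x j)
            ≤ (∑ j ∈ Finset.univ.filter (fun j : Fin n => ¬ V * d j < q j), (q j - V * d j)) * c := by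
          rw [Finset.sum_mul]
          apply Finset.sum_le_sum
          intro j hj
          have hmem : ¬ V * d j < q j := (Finset.mem_filter.mp hj).2
          push_neg at hmem
          nlinarith [hlb j]
        have hSfold : (∑ j ∈ Finset.univ.filter (fun j : Fin n => V * d j < q j),
            (q j - V * d j) * x j) = ∑ j ∈ S, (q j - V * d j) * x j := by rw [hS]
        rw [hSfold]
        have h3 : (∑ j ∈ Finset.univ.filter (fun j : Fin n => ¬ V * d j < q j), (q j - V * d j))
            = 1 - V - (∑ j ∈ S, (q j - V * d j)) := by linarith
        refine le_trans (add_le_add h1 h2) (le_of_eq ?_)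
        rw [h3, hP]
        ring
      have hfinal : c * ((Q S.card - V * D S.card) * (E - 1) + 1 - V) ≤ 0 := by
        apply mul_nonpos_of_nonneg_of_nonpos hcpos.le
        nlinarith
      have hexpand : ∑ j, (q j - V * d j) * x j
          = (∑ j, q j * x j) - V * (∑ j, d j * x j) := by
        rw [Finset.mul_sum, ← Finset.sum_sub_distrib]
        apply Finset.sum_congr rfl
        intro j _
        ring
      rw [hexpand] at hbound
      linarith
  · -- membership in the prefix-formula set
    exact ⟨ms, hms1, hmsk, rfl⟩
  · -- upper bound of the prefix-formula set
    rintro v ⟨m, hm1, hmk, rfl⟩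
    exact hmax m (Finset.mem_Icc.mpr ⟨hm1, hmk⟩)
end

section
/- Let q, d, q', d' ∈ [0, 1] be real numbers and define f(α) = (q·(e^α − 1) + 1)/(d·(e^α − 1) + 1) and f'(α) = (q'·(e^α − 1) + 1)/(d'·(e^α − 1) + 1). If 0 < a₁ < a₂, f(a₁) ≥ f'(a₁), and f(a₂) ≥ f'(a₂), then f(α) ≥ f'(α) for every α with a₁ ≤ α ≤ a₂. -/
set_option maxHeartbeats 1000000


/-- If `f ≥ f'` at two points `0 < a₁ < a₂`, then `f ≥ f'` on all of `[a₁, a₂]`,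
where `f(α) = (q·(e^α − 1) + 1)/(d·(e^α − 1) + 1)` and similarly for `f'`. -/
theorem stmt_7 (q d q' d' : ℝ)
    (hq : q ∈ Set.Icc (0 : ℝ) 1) (hd : d ∈ Set.Icc (0 : ℝ) 1)
    (hq' : q' ∈ Set.Icc (0 : ℝ) 1) (hd' : d' ∈ Set.Icc (0 : ℝ) 1)
    (a₁ a₂ : ℝ) (ha₁ : 0 < a₁) (ha₁₂ : a₁ < a₂)
    (h1 : (q' * (Real.exp a₁ - 1) + 1) / (d' * (Real.exp a₁ - 1) + 1) ≤
          (q * (Real.exp a₁ - 1) + 1) / (d * (Real.exp a₁ - 1) + 1))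
    (h2 : (q' * (Real.exp a₂ - 1) + 1) / (d' * (Real.exp a₂ - 1) + 1) ≤
          (q * (Real.exp a₂ - 1) + 1) / (d * (Real.exp a₂ - 1) + 1)) :
    ∀ α : ℝ, a₁ ≤ α → α ≤ a₂ →
      (q' * (Real.exp α - 1) + 1) / (d' * (Real.exp α - 1) + 1) ≤
      (q * (Real.exp α - 1) + 1) / (d * (Real.exp α - 1) + 1) := by
  intro α hα₁ hα₂
  obtain ⟨hq0, hq1⟩ := hq
  obtain ⟨hd0, hd1⟩ := hd
  obtain ⟨hq0', hq1'⟩ := hq'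
  obtain ⟨hd0', hd1'⟩ := hd'
  set x₁ := Real.exp a₁ - 1 with hx₁def
  set x₂ := Real.exp a₂ - 1 with hx₂def
  set x := Real.exp α - 1 with hxdef
  have hx₁ : 0 < x₁ := by
    simp [hx₁def]; linarith [Real.add_one_lt_exp (ne_of_gt ha₁)]
  have hx₂ : 0 < x₂ := by
    simp [hx₂def]; linarith [Real.add_one_lt_exp (ne_of_gt (ha₁.trans ha₁₂))]
  have hx : 0 < x := by
    simp [hxdef]; linarith [Real.add_one_lt_exp (ne_of_gt (ha₁.trans_le hα₁))]
  have hle1 : x₁ ≤ x := by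
    have := Real.exp_le_exp.mpr hα₁; simp [hx₁def, hxdef]; linarith
  have hle2 : x ≤ x₂ := by
    have := Real.exp_le_exp.mpr hα₂; simp [hx₂def, hxdef]; linarith
  -- positivity of denominators
  have den : ∀ c y : ℝ, 0 ≤ c → 0 < y → (0:ℝ) < c * y + 1 := by
    intro c y hc hy; nlinarith
  have D1 := den d x₁ hd0 hx₁
  have D1' := den d' x₁ hd0' hx₁
  have D2 := den d x₂ hd0 hx₂
  have D2' := den d' x₂ hd0' hx₂
  have D := den d x hd0 hx
  have D' := den d' x hd0' hx
  rw [div_le_div_iff₀ D1' D1] at h1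
  rw [div_le_div_iff₀ D2' D2] at h2
  rw [div_le_div_iff₀ D' D]
  -- reduce to linear condition A*y + B ≥ 0 at endpoints
  have hL1 : 0 ≤ (q*d' - q'*d) * x₁ + (q + d' - q' - d) := by
    have : 0 ≤ x₁ * ((q*d' - q'*d) * x₁ + (q + d' - q' - d)) := by nlinarith
    nlinarith
  have hL2 : 0 ≤ (q*d' - q'*d) * x₂ + (q + d' - q' - d) := by
    have : 0 ≤ x₂ * ((q*d' - q'*d) * x₂ + (q + d' - q' - d)) := by nlinarith
    nlinarith
  have hL : 0 ≤ (q*d' - q'*d) * x + (q + d' - q' - d) := by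
    rcases le_or_gt 0 (q*d' - q'*d) with hA | hA
    · linarith [mul_le_mul_of_nonneg_left hle1 hA]
    · linarith [mul_le_mul_of_nonpos_left hle2 hA.le]
  nlinarith [mul_nonneg hx.le hL]
end

section
/- Let q, d, q', d' ∈ [0, 1] and define f(α) = (q·(e^α − 1) + 1)/(d·(e^α − 1) + 1) and f'(α) = (q'·(e^α − 1) + 1)/(d'·(e^α − 1) + 1). If (q·d' − q'·d, q + d' − q' − d) ≠ (0, 0), then the set { α : ℝ | α > 0 ∧ f(α) = f'(α) } contains at most one element. -/
/-!
With `u = e^α - 1`, which is positive and injective in `α > 0`, clearing the (positive)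
denominators turns `f(α) = f'(α)` into `u · ((q d' - q' d) u + (q + d' - q' - d)) = 0`.
As `u ≠ 0`, the affine factor vanishes, and a nontrivial affine equation has at most one root.
-/

theorem div_affine_eq_div_affine_iff {K : Type*} [Field K] {q d q' d' u : K}
    (hd : d * u + 1 ≠ 0) (hd' : d' * u + 1 ≠ 0) :
    (q * u + 1) / (d * u + 1) = (q' * u + 1) / (d' * u + 1) ↔
      u * ((q * d' - q' * d) * u + (q + d' - q' - d)) = 0 := by
  rw [div_eq_div_iff hd hd']
  constructor <;> intro h <;> linear_combination h

theorem eq_of_affine_eq_zero {K : Type*} [Field K] {a b u v : K} (hab : ¬(a = 0 ∧ b = 0))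
    (hu : a * u + b = 0) (hv : a * v + b = 0) : u = v := by
  have ha : a ≠ 0 := fun ha => hab ⟨ha, by simpa [ha] using hu⟩
  exact mul_left_cancel₀ ha (by linear_combination hu - hv)

theorem affine_eq_zero_of_div_affine_eq_div_affine {K : Type*} [Field K] [LinearOrder K]
    [IsStrictOrderedRing K] {q d q' d' u : K} (hd : 0 ≤ d) (hd' : 0 ≤ d') (hu : 0 < u)
    (h : (q * u + 1) / (d * u + 1) = (q' * u + 1) / (d' * u + 1)) :
    (q * d' - q' * d) * u + (q + d' - q' - d) = 0 :=
  (mul_eq_zero.1 ((div_affine_eq_div_affine_iff (by positivity) (by positivity)).1 h)).resolve_left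
    hu.ne'

theorem stmt_8_general (q d q' d' : ℝ)
    (hd : d ∈ Set.Icc (0 : ℝ) 1)
    (hd' : d' ∈ Set.Icc (0 : ℝ) 1)
    (h : ¬(q * d' - q' * d = 0 ∧ q + d' - q' - d = 0)) :
    Set.Subsingleton {α : ℝ | 0 < α ∧
      (q * (Real.exp α - 1) + 1) / (d * (Real.exp α - 1) + 1) =
      (q' * (Real.exp α - 1) + 1) / (d' * (Real.exp α - 1) + 1)} := by
  have root : ∀ α : ℝ, 0 < α →
      (q * (Real.exp α - 1) + 1) / (d * (Real.exp α - 1) + 1) =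
        (q' * (Real.exp α - 1) + 1) / (d' * (Real.exp α - 1) + 1) →
      (q * d' - q' * d) * (Real.exp α - 1) + (q + d' - q' - d) = 0 := fun α hα =>
    affine_eq_zero_of_div_affine_eq_div_affine hd.1 hd'.1 (sub_pos.2 (Real.one_lt_exp_iff.2 hα))
  rintro a ⟨ha, hfa⟩ b ⟨hb, hfb⟩
  exact Real.exp_injective <| sub_left_injective <|
    eq_of_affine_eq_zero h (root a ha hfa) (root b hb hfb)

/-- Two such linear-fractional functions of `e^α − 1` agree at most once on
`(0, ∞)` unless `(q·d' − q'·d, q + d' − q' − d) = (0, 0)`. -/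
theorem stmt_8 (q d q' d' : ℝ)
    (hq : q ∈ Set.Icc (0 : ℝ) 1) (hd : d ∈ Set.Icc (0 : ℝ) 1)
    (hq' : q' ∈ Set.Icc (0 : ℝ) 1) (hd' : d' ∈ Set.Icc (0 : ℝ) 1)
    (h : ¬(q * d' - q' * d = 0 ∧ q + d' - q' - d = 0)) :
    Set.Subsingleton {α : ℝ | 0 < α ∧
      (q * (Real.exp α - 1) + 1) / (d * (Real.exp α - 1) + 1) =
      (q' * (Real.exp α - 1) + 1) / (d' * (Real.exp α - 1) + 1)} :=
  stmt_8_general q d q' d' hd hd' h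
end

section
/- Let 0 ≤ q ≤ 1, 0 < d ≤ 1, and ε > 0. Define F = (√(4·d·e^ε·(1 − q) + (d + q·e^ε − 1)²) + d + q·e^ε − 1)/(2·d). Then F > 1 and F·(d·(F − 1) + 1) = e^ε·(q·(F − 1) + 1); equivalently, α* = log F satisfies the fixed-point equation α* = log((q·(e^{α*} − 1) + 1)/(d·(e^{α*} − 1) + 1)) + ε. In particular the discriminant 4·d·e^ε·(1 − q) + (d + q·e^ε − 1)² is nonnegative. -/
/-- The closed-form supremum for the case `d ≠ 0`: `F > 1`, `F` satisfies the
fixed-point equation `F·(d·(F − 1) + 1) = e^ε·(q·(F − 1) + 1)`; equivalently `α* = log F`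
satisfies `α* = log((q·(e^{α*} − 1) + 1)/(d·(e^{α*} − 1) + 1)) + ε`.  In particular the
discriminant is nonnegative. -/
theorem stmt_9 (q d ε : ℝ) (hq0 : 0 ≤ q) (hq1 : q ≤ 1) (hd0 : 0 < d) (hd1 : d ≤ 1)
    (hε : 0 < ε)
    (F : ℝ)
    (hF : F = (Real.sqrt (4 * d * Real.exp ε * (1 - q) + (d + q * Real.exp ε - 1) ^ 2)
                + d + q * Real.exp ε - 1) / (2 * d)) :
    F > 1 ∧
    F * (d * (F - 1) + 1) = Real.exp ε * (q * (F - 1) + 1) ∧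
    Real.log F =
      Real.log ((q * (Real.exp (Real.log F) - 1) + 1) / (d * (Real.exp (Real.log F) - 1) + 1)) + ε ∧
    0 ≤ 4 * d * Real.exp ε * (1 - q) + (d + q * Real.exp ε - 1) ^ 2 := by
  set E := Real.exp ε with hE
  have hE1 : 1 < E := by
    rw [hE]; calc (1:ℝ) = Real.exp 0 := (Real.exp_zero).symm
    _ < Real.exp ε := Real.exp_lt_exp.mpr hε
  set Δ := 4 * d * E * (1 - q) + (d + q * E - 1) ^ 2 with hΔ
  have hΔ0 : 0 ≤ Δ := by
    have : 0 ≤ 4 * d * E * (1 - q) := mul_nonneg (by positivity) (by linarith)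
    nlinarith [sq_nonneg (d + q * E - 1)]
  set s := Real.sqrt Δ with hs
  have hs0 : 0 ≤ s := Real.sqrt_nonneg _
  have hssq : s ^ 2 = Δ := Real.sq_sqrt hΔ0
  -- Δ > (d + 1 - q*E)^2
  have hkey : (d + 1 - q * E) ^ 2 < Δ := by
    have : Δ - (d + 1 - q * E) ^ 2 = 4 * d * (E - 1) := by ring
    nlinarith
  have hsgt : d + 1 - q * E < s := by
    have h1 : |d + 1 - q * E| < s := by
      have := Real.sqrt_lt_sqrt (sq_nonneg (d + 1 - q * E)) hkey
      rwa [Real.sqrt_sq_eq_abs] at this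
    calc d + 1 - q * E ≤ |d + 1 - q * E| := le_abs_self _
    _ < s := h1
  have hFgt : F > 1 := by
    rw [hF]
    rw [gt_iff_lt, lt_div_iff₀ (by linarith : (0:ℝ) < 2 * d)]
    linarith
  have hFeq : F * (d * (F - 1) + 1) = E * (q * (F - 1) + 1) := by
    have hd' : (2 * d) ≠ 0 := by positivity
    rw [hF]
    field_simp
    nlinarith [hssq]
  refine ⟨hFgt, hFeq, ?_, hΔ0⟩
  have hF0 : 0 < F := by linarith
  rw [Real.exp_log hF0]
  have hden : 0 < d * (F - 1) + 1 := by nlinarith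
  have hnum : 0 < q * (F - 1) + 1 := by nlinarith
  have hquot : (q * (F - 1) + 1) / (d * (F - 1) + 1) = F / E := by
    rw [div_eq_div_iff (by linarith) (by positivity)]
    linarith [hFeq]
  rw [hquot, Real.log_div (by linarith) (by positivity), hE, Real.log_exp]
  ring
end

section
/- Let 0 < q ≤ 1 and ε > 0 with q·e^ε > 1. Define the sequence a : ℕ → ℝ by a 1 = ε and a (t+1) = log(q·(e^{a t} − 1) + 1) + ε. Then for every t ≥ 1, a t ≥ (t − 1)·log(q·e^ε) + ε; in particular the sequence (a t) is unbounded above, i.e., for every M there exists t with a t > M. -/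
/-- divergence case: if `q·e^ε > 1`, the recursively defined leakage sequence
`a 1 = ε`, `a (t+1) = log(q·(e^{a t} − 1) + 1) + ε` satisfies
`a t ≥ (t − 1)·log(q·e^ε) + ε` for all `t ≥ 1`, hence is unbounded above. -/
theorem stmt_11 (q ε : ℝ) (hq0 : 0 < q) (hq1 : q ≤ 1) (hε : 0 < ε)
    (hqe : 1 < q * Real.exp ε)
    (a : ℕ → ℝ) (ha1 : a 1 = ε)
    (harec : ∀ t : ℕ, 1 ≤ t → a (t + 1) = Real.log (q * (Real.exp (a t) - 1) + 1) + ε) :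
    (∀ t : ℕ, 1 ≤ t → ((t : ℝ) - 1) * Real.log (q * Real.exp ε) + ε ≤ a t) ∧
    (∀ M : ℝ, ∃ t : ℕ, M < a t) := by
  set L := Real.log (q * Real.exp ε) with hL
  have hLpos : 0 < L := Real.log_pos hqe
  have hLeq : L = Real.log q + ε := by
    rw [hL, Real.log_mul (ne_of_gt hq0) (ne_of_gt (Real.exp_pos ε)), Real.log_exp]
  have key : ∀ t : ℕ, 1 ≤ t → ((t : ℝ) - 1) * L + ε ≤ a t := by
    intro t ht
    induction t with
    | zero => omega
    | succ n ih =>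
      rcases Nat.eq_or_lt_of_le ht with h1 | h1
      · simp [← h1, ha1]
      · have hn : 1 ≤ n := by omega
        have ihn := ih hn
        have hrec := harec n hn
        have h2 : q * Real.exp (a n) ≤ q * (Real.exp (a n) - 1) + 1 := by nlinarith
        have h3 : Real.log (q * Real.exp (a n)) ≤ Real.log (q * (Real.exp (a n) - 1) + 1) :=
          Real.log_le_log (by positivity) h2
        have h4 : Real.log (q * Real.exp (a n)) = Real.log q + a n := by
          rw [Real.log_mul (ne_of_gt hq0) (ne_of_gt (Real.exp_pos _)), Real.log_exp]
        have : a n + L ≤ a (n + 1) := by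
          rw [hrec, hLeq]; linarith
        have : ((n : ℝ) - 1) * L + ε + L ≤ a (n + 1) := by linarith
        push_cast
        linarith
  refine ⟨key, fun M => ?_⟩
  obtain ⟨n, hn⟩ := exists_nat_gt ((M - ε) / L)
  refine ⟨n + 1, lt_of_lt_of_le ?_ (key (n + 1) (by omega))⟩
  have : M - ε < n * L := by
    rw [div_lt_iff₀ hLpos] at hn; linarith
  push_cast
  linarith
end

section
/- Let 0 < d ≤ q ≤ 1 and ε > 0, and let F = (√(4·d·e^ε·(1 − q) + (d + q·e^ε − 1)²) + d + q·e^ε − 1)/(2·d). Define the sequence a : ℕ → ℝ by a 1 = ε and a (t+1) = log((q·(e^{a t} − 1) + 1)/(d·(e^{a t} − 1) + 1)) + ε. Then a t ≤ log F for every t ≥ 1; that is, log F is an upper bound for the privacy leakage at every time point. -/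
/-!
Write `E = e^ε` and `g x = E · (q(x − 1) + 1)/(d(x − 1) + 1)`, so that `e^{a (t+1)} = g (e^{a t})`
and `e^{a 1} = E = g 1`. Since `d ≤ q`, the map `g` is monotone on `x > 0`, and `F` is the root
`≥ 1` of the quadratic `F · (d(F − 1) + 1) = E · (q(F − 1) + 1)`, i.e. a fixed point of `g`.
Hence `x ≤ F` implies `g x ≤ g F = F`, and by induction `e^{a t} ≤ F` for all `t ≥ 1`.
-/

open Real

namespace LeakageBound

noncomputable def leakageRatio (q d x : ℝ) : ℝ := (q * (x - 1) + 1) / (d * (x - 1) + 1)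

noncomputable def fixedPoint (q d E : ℝ) : ℝ :=
  (√(4 * d * E * (1 - q) + (d + q * E - 1) ^ 2) + d + q * E - 1) / (2 * d)

lemma mul_sub_one_add_one_pos {c x : ℝ} (hc0 : 0 ≤ c) (hc1 : c ≤ 1) (hx : 0 < x) :
    0 < c * (x - 1) + 1 := by
  nlinarith [mul_nonneg hc0 hx.le, mul_nonneg (sub_nonneg.2 hc1) hx.le]

lemma leakageRatio_pos {q d x : ℝ} (hd0 : 0 ≤ d) (hdq : d ≤ q) (hq1 : q ≤ 1) (hx : 0 < x) :
    0 < leakageRatio q d x :=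
  div_pos (mul_sub_one_add_one_pos (hd0.trans hdq) hq1 hx)
    (mul_sub_one_add_one_pos hd0 (hdq.trans hq1) hx)

lemma leakageRatio_le_leakageRatio {q d x y : ℝ} (hd0 : 0 ≤ d) (hd1 : d ≤ 1) (hdq : d ≤ q)
    (hx : 0 < x) (hxy : x ≤ y) : leakageRatio q d x ≤ leakageRatio q d y := by
  unfold leakageRatio
  rw [div_le_div_iff₀ (mul_sub_one_add_one_pos hd0 hd1 hx)
    (mul_sub_one_add_one_pos hd0 hd1 (hx.trans_le hxy))]
  have hcross : (q * (y - 1) + 1) * (d * (x - 1) + 1) - (q * (x - 1) + 1) * (d * (y - 1) + 1)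
      = (q - d) * (y - x) := by ring
  linarith [mul_nonneg (sub_nonneg.mpr hdq) (sub_nonneg.mpr hxy)]

section FixedPoint

variable {q d E : ℝ}

lemma fixedPoint_isRoot (hd0 : 0 < d) (hq1 : q ≤ 1) (hE0 : 0 ≤ E) :
    d * (fixedPoint q d E * fixedPoint q d E) + (1 - d - q * E) * fixedPoint q d E
      + -(E * (1 - q)) = 0 := by
  have hdisc : 0 ≤ 4 * d * E * (1 - q) + (d + q * E - 1) ^ 2 := by
    have := mul_nonneg (mul_nonneg hd0.le hE0) (sub_nonneg.mpr hq1)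
    positivity
  rw [quadratic_eq_zero_iff hd0.ne' (s := √(4 * d * E * (1 - q) + (d + q * E - 1) ^ 2))]
  · left
    unfold fixedPoint
    ring
  · rw [mul_self_sqrt hdisc, discrim]
    ring

-- The discriminant exceeds `(d − qE + 1)²` by `4d(E − 1)`, which makes the root at least `1`.
lemma one_le_fixedPoint (hd0 : 0 < d) (hE1 : 1 ≤ E) : 1 ≤ fixedPoint q d E := by
  have hsq : (d - q * E + 1) ^ 2 ≤ 4 * d * E * (1 - q) + (d + q * E - 1) ^ 2 := by
    nlinarith [mul_nonneg hd0.le (sub_nonneg.mpr hE1)]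
  have hsqrt := (le_abs_self _).trans (abs_le_sqrt hsq)
  unfold fixedPoint
  rw [le_div_iff₀ (by positivity)]
  linarith

lemma mul_leakageRatio_fixedPoint (hd0 : 0 < d) (hd1 : d ≤ 1) (hq1 : q ≤ 1) (hE1 : 1 ≤ E) :
    E * leakageRatio q d (fixedPoint q d E) = fixedPoint q d E := by
  have hroot := fixedPoint_isRoot (E := E) hd0 hq1 (zero_le_one.trans hE1)
  have hden := mul_sub_one_add_one_pos hd0.le hd1
    (zero_lt_one.trans_le (one_le_fixedPoint (q := q) hd0 hE1))
  unfold leakageRatio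
  rw [mul_div_assoc', div_eq_iff hden.ne']
  linear_combination -hroot

lemma mul_leakageRatio_le_fixedPoint (hd0 : 0 < d) (hdq : d ≤ q) (hq1 : q ≤ 1) (hE1 : 1 ≤ E)
    {x : ℝ} (hx : 0 < x) (hxF : x ≤ fixedPoint q d E) :
    E * leakageRatio q d x ≤ fixedPoint q d E :=
  calc E * leakageRatio q d x
      ≤ E * leakageRatio q d (fixedPoint q d E) :=
        mul_le_mul_of_nonneg_left
          (leakageRatio_le_leakageRatio hd0.le (hdq.trans hq1) hdq hx hxF)
          (zero_le_one.trans hE1)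
    _ = fixedPoint q d E := mul_leakageRatio_fixedPoint hd0 (hdq.trans hq1) hq1 hE1

end FixedPoint

end LeakageBound

open LeakageBound in
/-- boundedness case: with `0 < d ≤ q ≤ 1` and the fixed point `F` from the
supremum theorem, the recursively defined leakage sequence `a 1 = ε`,
`a (t+1) = log((q·(e^{a t} − 1) + 1)/(d·(e^{a t} − 1) + 1)) + ε` satisfies `a t ≤ log F`
for every `t ≥ 1`. -/
theorem stmt_12 (q d ε : ℝ) (hd0 : 0 < d) (hdq : d ≤ q) (hq1 : q ≤ 1) (hε : 0 < ε)
    (F : ℝ)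
    (hF : F = (Real.sqrt (4 * d * Real.exp ε * (1 - q) + (d + q * Real.exp ε - 1) ^ 2)
                + d + q * Real.exp ε - 1) / (2 * d))
    (a : ℕ → ℝ) (ha1 : a 1 = ε)
    (harec : ∀ t : ℕ, 1 ≤ t →
      a (t + 1) =
        Real.log ((q * (Real.exp (a t) - 1) + 1) / (d * (Real.exp (a t) - 1) + 1)) + ε) :
    ∀ t : ℕ, 1 ≤ t → a t ≤ Real.log F := by
  replace hF : F = fixedPoint q d (exp ε) := hF
  subst hF
  have hE1 : 1 ≤ exp ε := one_le_exp hε.le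
  have hF0 : 0 < fixedPoint q d (exp ε) := zero_lt_one.trans_le (one_le_fixedPoint hd0 hE1)
  intro t ht
  rw [le_log_iff_exp_le hF0]
  induction t, ht using Nat.le_induction with
  | base =>
    have hratio_one : leakageRatio q d 1 = 1 := by simp [leakageRatio]
    simpa [ha1, hratio_one] using
      mul_leakageRatio_le_fixedPoint hd0 hdq hq1 hE1 zero_lt_one (one_le_fixedPoint hd0 hE1)
  | succ t ht ih =>
    rw [harec t ht]
    change exp (log (leakageRatio q d (exp (a t))) + ε) ≤ _
    rw [exp_add, exp_log (leakageRatio_pos hd0.le hdq hq1 (exp_pos _)), mul_comm]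
    exact mul_leakageRatio_le_fixedPoint hd0 hdq hq1 hE1 (exp_pos _) ih
end

section
/- Let X be a type, S ⊆ X a nonempty set, and Q, D : X → ℝ functions with D x > 0 for every x ∈ S. Let x* ∈ S and put λ = Q x* / D x*. Then the following are equivalent: (i) x* maximizes the ratio, i.e., Q x / D x ≤ λ for every x ∈ S; (ii) 0 is the greatest value of { Q x − λ·D x : x ∈ S }, i.e., Q x − λ·D x ≤ 0 for every x ∈ S and the value 0 is attained (at x*). -/
/-- Dinkelbach's characterization: `x* ∈ S` maximizes `Q x / D x` over `S`
iff `0` is the greatest value of `{ Q x − λ·D x : x ∈ S }`, where `λ = Q x* / D x*`. -/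
theorem stmt_13 {X : Type*} (S : Set X) (hS : S.Nonempty) (Q D : X → ℝ)
    (hD : ∀ x ∈ S, 0 < D x) (xstar : X) (hx : xstar ∈ S)
    (lam : ℝ) (hlam : lam = Q xstar / D xstar) :
    (∀ x ∈ S, Q x / D x ≤ lam) ↔
      IsGreatest {v : ℝ | ∃ x ∈ S, v = Q x - lam * D x} 0 := by
  have hzero : Q xstar - lam * D xstar = 0 := by
    rw [hlam, div_mul_cancel₀ _ (hD xstar hx).ne']
    ring
  constructor
  · intro h
    constructor
    · exact ⟨xstar, hx, hzero.symm⟩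
    · rintro v ⟨x, hxS, rfl⟩
      have := (div_le_iff₀ (hD x hxS)).mp (h x hxS)
      linarith
  · rintro ⟨_, hub⟩ x hxS
    have := hub ⟨x, hxS, rfl⟩
    rw [div_le_iff₀ (hD x hxS)]
    linarith
end

section
/- Let n ≥ 1, let q, d : Fin n → ℝ be rows of a transition matrix, and let α > 0. Then: (a) for every vector x : Fin n → ℝ feasible for α, (∑ j, q j · x j) ≤ e^α · (∑ j, d j · x j); and (b) there exists a feasible x with (∑ j, q j · x j) = (∑ j, d j · x j). Consequently the supremum over feasible x of log((∑ j, q j · x j)/(∑ j, d j · x j)) lies in the interval [0, α]; i.e., the temporal privacy loss function satisfies 0 ≤ L(α) ≤ α. -/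
/-- (a) For every feasible `x`, `∑ q·x ≤ e^α · ∑ d·x`; (b) some feasible `x`
makes the two sums equal; consequently the supremum of the log ratio over feasible vectors
lies in `[0, α]`, i.e. the temporal privacy loss function satisfies `0 ≤ L(α) ≤ α`. -/
theorem stmt_16 (n : ℕ) (hn : 1 ≤ n) (q d : Fin n → ℝ)
    (hq0 : ∀ j, 0 ≤ q j) (hq1 : ∑ j, q j = 1)
    (hd0 : ∀ j, 0 ≤ d j) (hd1 : ∑ j, d j = 1)
    (α : ℝ) (hα : 0 < α) :
    (∀ x : Fin n → ℝ, (∀ j, 0 < x j ∧ x j < 1) → (∀ j k, x j ≤ Real.exp α * x k) →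
      (∑ j, q j * x j) ≤ Real.exp α * ∑ j, d j * x j) ∧
    (∃ x : Fin n → ℝ, (∀ j, 0 < x j ∧ x j < 1) ∧ (∀ j k, x j ≤ Real.exp α * x k) ∧
      (∑ j, q j * x j) = ∑ j, d j * x j) ∧
    sSup {r : ℝ | ∃ x : Fin n → ℝ,
        (∀ j, 0 < x j ∧ x j < 1) ∧
        (∀ j k, x j ≤ Real.exp α * x k) ∧
        r = Real.log ((∑ j, q j * x j) / (∑ j, d j * x j))} ∈ Set.Icc (0 : ℝ) α := by
  haveI : NeZero n := ⟨Nat.one_le_iff_ne_zero.mp hn⟩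
  -- positivity of ∑ d x for positive x
  have hgen : ∀ c : Fin n → ℝ, (∀ j, 0 ≤ c j) → (∑ j, c j) = 1 →
      ∀ x : Fin n → ℝ, (∀ j, 0 < x j) → 0 < ∑ j, c j * x j := by
    intro c hc0 hc1 x hx
    have : ∃ j, 0 < c j := by
      by_contra h
      push_neg at h
      have : (∑ j, c j) = 0 := Finset.sum_eq_zero fun j _ => le_antisymm (h j) (hc0 j)
      simp [hc1] at this
    obtain ⟨j, hj⟩ := this
    refine Finset.sum_pos' (fun i _ => mul_nonneg (hc0 i) (hx i).le) ⟨j, Finset.mem_univ j, mul_pos hj (hx j)⟩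
  have hdpos : ∀ x : Fin n → ℝ, (∀ j, 0 < x j) → 0 < ∑ j, d j * x j := hgen d hd0 hd1
  -- part (a)
  have ha : ∀ x : Fin n → ℝ, (∀ j, 0 < x j ∧ x j < 1) → (∀ j k, x j ≤ Real.exp α * x k) →
      (∑ j, q j * x j) ≤ Real.exp α * ∑ j, d j * x j := by
    intro x hx hxk
    calc ∑ j, q j * x j = ∑ j, ∑ k, q j * d k * x j := by
          refine Finset.sum_congr rfl fun j _ => ?_
          rw [← Finset.sum_mul, ← Finset.mul_sum, hd1, mul_one]
      _ ≤ ∑ j, ∑ k, q j * d k * (Real.exp α * x k) := by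
          refine Finset.sum_le_sum fun j _ => Finset.sum_le_sum fun k _ => ?_
          exact mul_le_mul_of_nonneg_left (hxk j k) (mul_nonneg (hq0 j) (hd0 k))
      _ = Real.exp α * ∑ k, d k * x k := by
          rw [Finset.sum_comm]
          rw [Finset.mul_sum]
          refine Finset.sum_congr rfl fun k _ => ?_
          rw [← Finset.sum_mul, ← Finset.sum_mul, hq1]
          ring
  refine ⟨ha, ?_, ?_⟩
  · -- part (b): constant 1/2
    refine ⟨fun _ => 1/2, fun j => ⟨by norm_num, by norm_num⟩, fun j k => ?_, ?_⟩
    · nlinarith [Real.one_le_exp hα.le]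
    · simp [← Finset.sum_mul, hq1, hd1]
  · -- part (c)
    set S := {r : ℝ | ∃ x : Fin n → ℝ,
        (∀ j, 0 < x j ∧ x j < 1) ∧
        (∀ j k, x j ≤ Real.exp α * x k) ∧
        r = Real.log ((∑ j, q j * x j) / (∑ j, d j * x j))}
    have h0 : (0 : ℝ) ∈ S := by
      refine ⟨fun _ => 1/2, fun j => ⟨by norm_num, by norm_num⟩, fun j k => ?_, ?_⟩
      · nlinarith [Real.one_le_exp hα.le]
      · have : (∑ j, q j * (1/2 : ℝ)) = ∑ j, d j * (1/2 : ℝ) := by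
          simp [← Finset.sum_mul, hq1, hd1]
        rw [this, div_self, Real.log_one]
        have := hdpos (fun _ => (1/2 : ℝ)) (fun _ => by norm_num)
        exact this.ne'
    have hub : ∀ r ∈ S, r ≤ α := by
      rintro r ⟨x, hx, hxk, rfl⟩
      have hd' := hdpos x (fun j => (hx j).1)
      have hle := ha x hx hxk
      have : (∑ j, q j * x j) / (∑ j, d j * x j) ≤ Real.exp α := by
        rw [div_le_iff₀ hd']
        linarith [hle]
      calc Real.log ((∑ j, q j * x j) / (∑ j, d j * x j)) ≤ Real.log (Real.exp α) := by
            apply Real.log_le_log _ this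
            exact div_pos (hgen q hq0 hq1 x (fun j => (hx j).1)) hd'
        _ = α := Real.log_exp α
    constructor
    · exact le_csSup ⟨α, hub⟩ h0
    · exact csSup_le ⟨0, h0⟩ hub
end
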